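/- For integers 1 ≤ K < d and Θ(u) = (1/K) Σ_{j=0}^{K-1} (K-j) C(d,j) u^{d-j-1}(1-u)^j, the (K+1)-st derivative of Θ at u = 1 equals (-1)^{K+1} ((d! - (d-K)!(K+1)!)/(d-K)!) · (d-K)/K. -/

import Mathlib

/-!
Put u = 1 + s. The j-th summand of Θ becomes (-s)^j (1 + s)^(d-j-1), so the (K+1)-st derivative
of Θ at 1 is (K+1)!/K times Σ_{j<K} (K-j) (-1)^j C(d,j) C(d-j-1, K+1-j), its coefficient of
s^(K+1). Extending this sum to j ≤ K + 1 only adds the term j = K + 1, and the extended sum splits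
into two known sums. The first, Σ_{j≤n} (-1)^j C(d,j) C(d-j-1, n-j) = (-1)^n, is the coefficient of
s^n in Σ_j C(d,j) (-s)^j (1+s)^(d-j-1) = Σ_m (-s)^m. After multiplying by 1 + s this identity is
the binomial theorem for ((-s) + (1+s))^d. The second sum, with an extra weight j, follows from
j C(d,j) = d C(d-1,j-1).
-/

open Real Finset

theorem sum_range_choose_mul_pow_mul_pow_eq_geom_sum {R : Type*} [CommRing R] {x y : R}
    (hxy : x + y = 1) (hy : IsLeftRegular y) (d : ℕ) :
    ∑ j ∈ range (d + 1), (d.choose j : R) * x ^ j * y ^ (d - j - 1) =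
      ∑ m ∈ range (d + 1), x ^ m := by
  apply hy
  have hlow : ∀ j ∈ range d, x ^ j * y ^ (d - j) * d.choose j =
      y * ((d.choose j : R) * x ^ j * y ^ (d - j - 1)) := by
    intro j hj
    rw [show d - j = d - j - 1 + 1 by grind, pow_succ, Nat.add_sub_cancel]
    ring
  have hbinom := add_pow x y d
  rw [hxy, one_pow, sum_range_succ, sum_congr rfl hlow] at hbinom
  have hgeom := mul_neg_geom_sum x (d + 1)
  rw [show 1 - x = y by linear_combination -hxy] at hgeom
  -- at j = d the exponent d - j - 1 truncates to 0
  simp only [sum_range_succ, mul_add, mul_sum, Nat.choose_self, Nat.sub_self] at hbinom hgeom ⊢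
  linear_combination -hbinom - hgeom + x ^ d * hxy

namespace Polynomial

variable {R : Type*} [CommRing R]

theorem coeff_neg_X_pow_mul_X_add_one_pow (j a n : ℕ) :
    ((-X : R[X]) ^ j * (X + 1) ^ a).coeff n =
      if j ≤ n then (-1 : R) ^ j * a.choose (n - j) else 0 := by
  rw [neg_pow, ← C_1, ← C_neg, ← C_pow, mul_assoc, coeff_C_mul, coeff_X_pow_mul', C_1]
  split_ifs <;> simp [coeff_X_add_one_pow]

theorem coeff_neg_X_pow (j n : ℕ) :
    ((-X : R[X]) ^ j).coeff n = if n = j then (-1 : R) ^ j else 0 := by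
  rw [neg_pow, ← C_1, ← C_neg, ← C_pow, coeff_C_mul, coeff_X_pow]
  simp

theorem taylor_one_X_pow_mul_one_sub_X_pow (a j : ℕ) :
    taylor 1 (X ^ a * (1 - X) ^ j : R[X]) = (-X) ^ j * (X + 1) ^ a := by
  simp only [taylor_mul, taylor_pow, taylor_X, map_sub, taylor_one, C_1]
  ring

theorem iteratedDeriv_eval_eq_factorial_mul_taylor_coeff {𝕜 : Type*} [NontriviallyNormedField 𝕜]
    (p : 𝕜[X]) (r : 𝕜) (n : ℕ) :
    iteratedDeriv n (fun x => p.eval x) r = n.factorial * (taylor r p).coeff n := by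
  have hiterate : deriv^[n] (fun x => p.eval x) = fun x => (derivative^[n] p).eval x := by
    induction n with
    | zero => rfl
    | succ n ih =>
      rw [Function.iterate_succ_apply', ih, Function.iterate_succ_apply']
      funext x
      exact Polynomial.deriv _
  rw [iteratedDeriv_eq_iterate, hiterate, ← factorial_smul_hasseDeriv, taylor_coeff]
  simp [nsmul_eq_mul]

end Polynomial

open Polynomial in
theorem iteratedDeriv_const_mul_sum_mul_pow_mul_one_sub_pow_one (c : ℝ) (w : ℕ → ℝ) (a : ℕ → ℕ)
    (s : Finset ℕ) {n : ℕ} (hs : ∀ j ∈ s, j ≤ n) :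
    iteratedDeriv n (fun u : ℝ => c * ∑ j ∈ s, w j * u ^ a j * (1 - u) ^ j) 1 =
      n.factorial * c * ∑ j ∈ s, w j * (-1) ^ j * (a j).choose (n - j) := by
  have hpoly : (fun u : ℝ => c * ∑ j ∈ s, w j * u ^ a j * (1 - u) ^ j) =
      fun u => (C c * ∑ j ∈ s, C (w j) * (X ^ a j * (1 - X) ^ j)).eval u := by
    funext u
    simp [eval_finsetSum, mul_assoc]
  rw [hpoly, iteratedDeriv_eval_eq_factorial_mul_taylor_coeff, taylor_mul, taylor_C, map_sum,
    coeff_C_mul, finsetSum_coeff, mul_assoc]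
  congr 2
  refine sum_congr rfl fun j hj => ?_
  rw [taylor_mul, taylor_C, coeff_C_mul, taylor_one_X_pow_mul_one_sub_X_pow,
    coeff_neg_X_pow_mul_X_add_one_pow, if_pos (hs j hj)]
  ring

open Polynomial in
theorem sum_range_neg_one_pow_mul_choose_mul_choose {R : Type*} [CommRing R] {n d : ℕ}
    (hnd : n ≤ d) :
    ∑ j ∈ range (n + 1), (-1 : R) ^ j * d.choose j * (d - j - 1).choose (n - j) = (-1) ^ n := by
  have hpoly := congrArg (coeff · n) (sum_range_choose_mul_pow_mul_pow_eq_geom_sum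
    (x := (-X : R[X])) (y := X + 1) (by ring)
    (by simpa using (monic_X_add_C (1 : R)).isRegular.left) d)
  simp only [finsetSum_coeff, mul_assoc, ← C_eq_natCast, coeff_C_mul,
    coeff_neg_X_pow_mul_X_add_one_pow, coeff_neg_X_pow, sum_ite_eq, mem_range] at hpoly
  rw [if_pos (by omega), ← sum_range_add_sum_Ico _ (by omega : n + 1 ≤ d + 1),
    sum_eq_zero (s := Ico _ _) fun j hj => by rw [if_neg (by grind), mul_zero], add_zero] at hpoly
  rw [← hpoly]
  refine sum_congr rfl fun j hj => ?_
  rw [if_pos (by grind)]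
  ring

theorem sum_range_mul_neg_one_pow_mul_choose_mul_choose {R : Type*} [CommRing R] {n d : ℕ}
    (hn : 1 ≤ n) (hnd : n ≤ d) :
    ∑ j ∈ range (n + 1), (j : R) * (-1) ^ j * d.choose j * (d - j - 1).choose (n - j) =
      d * (-1) ^ n := by
  obtain ⟨n, rfl⟩ : ∃ m, n = m + 1 := ⟨n - 1, by omega⟩
  obtain ⟨d, rfl⟩ : ∃ m, d = m + 1 := ⟨d - 1, by omega⟩
  conv_rhs => rw [pow_succ, ← sum_range_neg_one_pow_mul_choose_mul_choose (R := R)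
    (by omega : n ≤ d), sum_mul, mul_sum]
  rw [sum_range_succ', Nat.cast_zero, zero_mul, zero_mul, zero_mul, add_zero]
  refine sum_congr rfl fun j _ => ?_
  have hchoose := congrArg (Nat.cast (R := R)) (Nat.add_one_mul_choose_eq d j)
  push_cast at hchoose ⊢
  rw [pow_succ]
  linear_combination ((-1 : R) ^ j * ((d - j - 1).choose (n - j) : R)) * hchoose

theorem sum_range_sub_mul_choose_mul_neg_one_pow_mul_choose {R : Type*} [CommRing R] {K d : ℕ}
    (hKd : K < d) :
    ∑ j ∈ range K, ((K : R) - j) * d.choose j * (-1) ^ j * (d - j - 1).choose (K + 1 - j) =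
      (-1) ^ (K + 1) * (d.choose (K + 1) - ((d : R) - K)) := by
  have hsum := sum_range_neg_one_pow_mul_choose_mul_choose (R := R) (n := K + 1) hKd
  have hweighted := sum_range_mul_neg_one_pow_mul_choose_mul_choose (R := R) le_add_self hKd
  simp only [sum_range_succ, Nat.sub_self, Nat.choose_zero_right] at hsum hweighted
  push_cast at hweighted
  calc ∑ j ∈ range K, ((K : R) - j) * d.choose j * (-1) ^ j * (d - j - 1).choose (K + 1 - j)
      = K * ∑ j ∈ range K, (-1 : R) ^ j * d.choose j * (d - j - 1).choose (K + 1 - j) -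
          ∑ j ∈ range K, (j : R) * (-1) ^ j * d.choose j * (d - j - 1).choose (K + 1 - j) := by
        rw [mul_sum, ← sum_sub_distrib]
        exact sum_congr rfl fun j _ => by ring
    _ = (-1) ^ (K + 1) * (d.choose (K + 1) - ((d : R) - K)) := by
        linear_combination (K : R) * hsum - hweighted

theorem stmt_9_general (K d : ℕ) (hKd : K < d)
    (Θ : ℝ → ℝ)
    (hΘ : Θ = fun u : ℝ => (1 / K) * ∑ j ∈ Finset.range K,
        ((K:ℝ) - j) * (d.choose j) * u ^ (d - j - 1) * (1 - u) ^ j) :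
    iteratedDeriv (K + 1) Θ 1 =
      (-1) ^ (K + 1) *
        (((d.factorial : ℝ) - ((d - K).factorial : ℝ) * ((K + 1).factorial : ℝ)) /
          ((d - K).factorial : ℝ)) * (((d:ℝ) - K) / K) := by
  have hderiv := iteratedDeriv_const_mul_sum_mul_pow_mul_one_sub_pow_one (1 / K)
    (fun j => ((K : ℝ) - j) * d.choose j) (fun j => d - j - 1) (range K) (n := K + 1)
    fun j hj => by grind
  have hfact : ((K + 1).factorial : ℝ) * (d.choose (K + 1) - ((d : ℝ) - K)) =
      ((d.factorial - (d - K).factorial * (K + 1).factorial) / (d - K).factorial) * (d - K) := by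
    have hchoose : (d.choose (K + 1) : ℝ) * (K + 1).factorial * (d - (K + 1)).factorial =
        d.factorial := by exact_mod_cast Nat.choose_mul_factorial_mul_factorial hKd
    have hsucc : ((d - K).factorial : ℝ) = (d - K) * (d - (K + 1)).factorial := by
      rw [show d - K = d - (K + 1) + 1 by omega, Nat.factorial_succ]
      push_cast [show K + 1 ≤ d from hKd]
      ring
    have hdK : (d : ℝ) - K ≠ 0 := sub_ne_zero.2 (by exact_mod_cast hKd.ne')
    rw [hsucc, ← hchoose]
    field_simp
  rw [hΘ, hderiv, sum_range_sub_mul_choose_mul_neg_one_pow_mul_choose hKd]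
  linear_combination (1 / K * (-1 : ℝ) ^ (K + 1)) * hfact

theorem stmt_9 (K d : ℕ) (hK : 1 ≤ K) (hKd : K < d)
    (Θ : ℝ → ℝ)
    (hΘ : Θ = fun u : ℝ => (1 / K) * ∑ j ∈ Finset.range K,
        ((K:ℝ) - j) * (d.choose j) * u ^ (d - j - 1) * (1 - u) ^ j) :
    iteratedDeriv (K + 1) Θ 1 =
      (-1) ^ (K + 1) *
        (((d.factorial : ℝ) - ((d - K).factorial : ℝ) * ((K + 1).factorial : ℝ)) /
          ((d - K).factorial : ℝ)) * (((d:ℝ) - K) / K) :=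
  stmt_9_general K d hKd Θ hΘ
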